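/- Suppose a measurable function φ_s on ℝ³ satisfies ‖φ_s‖_{L²} ≤ C₀ and ‖φ_s‖_{L^∞} ≤ C₀ (1+s)^{−3/2} for all s ≥ 0, where 0 < γ < 3/2. Then for every x ∈ ℝ³ and s ≥ 0, ∫ |x−y|^{−2γ} |φ_s(y)|² dy ≤ C (1+s)^{−2γ} for a constant C depending only on C₀ and γ. -/

import Mathlib

/-!
Split the integral at the ball `B(x, 1 + s)`. On the ball, bound `|φ_s|²` by the square of its
`L^∞` norm, `C₀² (1 + s)^{-3}`, and integrate the kernel in polar coordinates:
`∫_{B(0,R)} |y|^{-p} dy = d |B(0,1)| R^{d-p} / (d - p)` for `p < d`. Off the ball the kernel is at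
most `(1 + s)^{-2γ}`, and what remains is `‖φ_s‖²_{L²} ≤ C₀²`.
-/

open MeasureTheory Real Set Metric
open scoped ENNReal

theorem lintegral_Ioo_rpow {a R : ℝ} (ha : -1 < a) (hR : 0 ≤ R) :
    ∫⁻ r in Ioo 0 R, ENNReal.ofReal (r ^ a) = ENNReal.ofReal (R ^ (a + 1) / (a + 1)) := by
  have hint : IntegrableOn (fun r : ℝ => r ^ a) (Ioc 0 R) :=
    (intervalIntegral.intervalIntegrable_rpow' ha).1
  rw [Measure.restrict_congr_set Ioo_ae_eq_Ioc, ← ofReal_integral_eq_lintegral_ofReal hint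
    (ae_restrict_of_forall_mem measurableSet_Ioc fun r hr => rpow_nonneg hr.1.le a),
    ← intervalIntegral.integral_of_le hR, integral_rpow (.inl ha),
    zero_rpow (by linarith), sub_zero]

section LpBounds

variable {α F : Type*} [MeasurableSpace α] {μ : Measure α} [NormedAddCommGroup F]
  {f : α → F} {c : ℝ≥0∞}

theorem lintegral_enorm_sq_le_of_eLpNorm_two_le (h : eLpNorm f 2 μ ≤ c) :
    ∫⁻ y, ‖f y‖ₑ ^ 2 ∂μ ≤ c ^ 2 := by
  have hsq := eLpNorm_nnreal_pow_eq_lintegral (μ := μ) (f := f) (p := 2) two_ne_zero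
  simp only [NNReal.coe_ofNat, ENNReal.rpow_ofNat] at hsq
  rw [← hsq]
  gcongr
  exact_mod_cast h

theorem ae_enorm_sq_le_of_eLpNorm_top_le (h : eLpNorm f ∞ μ ≤ c) :
    ∀ᵐ y ∂μ, ‖f y‖ₑ ^ 2 ≤ c ^ 2 := by
  rw [eLpNorm_exponent_top] at h
  filter_upwards [ae_le_eLpNormEssSup (f := f)] with y hy
  gcongr
  exact hy.trans h

theorem integral_mul_norm_sq_le_toReal_lintegral {k : α → ℝ} (hk : 0 ≤ k) :
    ∫ y, k y * ‖f y‖ ^ 2 ∂μ ≤ (∫⁻ y, ENNReal.ofReal (k y) * ‖f y‖ₑ ^ 2 ∂μ).toReal := by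
  have hnorm : ∀ y, ENNReal.ofReal ‖k y * ‖f y‖ ^ 2‖ = ENNReal.ofReal (k y) * ‖f y‖ₑ ^ 2 :=
    fun y => by
      rw [norm_mul, norm_pow, norm_norm, norm_of_nonneg (hk y), ENNReal.ofReal_mul (hk y),
        ENNReal.ofReal_pow (norm_nonneg _), ofReal_norm]
  simp_rw [← hnorm]
  exact (le_norm_self _).trans (norm_integral_le_lintegral_norm _)

end LpBounds

section NormedGroup

variable {G : Type*} [NormedAddCommGroup G] [MeasurableSpace G] [BorelSpace G] (μ : Measure G)

theorem setLIntegral_ball_comp_sub_left [μ.IsAddLeftInvariant] [μ.IsNegInvariant]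
    (g : G → ℝ≥0∞) (x : G) (R : ℝ) :
    ∫⁻ y in ball x R, g (x - y) ∂μ = ∫⁻ y in ball 0 R, g y ∂μ := by
  have hmem : ∀ y, x - y ∈ ball (0 : G) R ↔ y ∈ ball x R := by
    intro y; rw [mem_ball_zero_iff, mem_ball, dist_eq_norm, norm_sub_rev]
  calc ∫⁻ y in ball x R, g (x - y) ∂μ = ∫⁻ y, (ball 0 R).indicator g (x - y) ∂μ := by
        rw [← lintegral_indicator measurableSet_ball]
        congr 1
        ext y
        by_cases hy : y ∈ ball x R
        · rw [indicator_of_mem hy, indicator_of_mem ((hmem y).2 hy)]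
        · rw [indicator_of_notMem hy, indicator_of_notMem (mt (hmem y).1 hy)]
    _ = ∫⁻ y in ball 0 R, g y ∂μ := by
        rw [lintegral_sub_left_eq_self, lintegral_indicator measurableSet_ball]

theorem setLIntegral_compl_ball_rpow_neg_norm_sub_mul_le (u : G → ℝ≥0∞) {p R : ℝ}
    (hp : 0 ≤ p) (hR : 0 < R) (x : G) :
    ∫⁻ y in (ball x R)ᶜ, ENNReal.ofReal (‖x - y‖ ^ (-p)) * u y ∂μ ≤
      ENNReal.ofReal (R ^ (-p)) * ∫⁻ y, u y ∂μ := by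
  calc ∫⁻ y in (ball x R)ᶜ, ENNReal.ofReal (‖x - y‖ ^ (-p)) * u y ∂μ
      ≤ ∫⁻ y in (ball x R)ᶜ, ENNReal.ofReal (R ^ (-p)) * u y ∂μ := by
        refine setLIntegral_mono' measurableSet_ball.compl fun y hy => ?_
        have hRy : R ≤ ‖x - y‖ := by simpa [dist_eq_norm'] using hy
        gcongr ENNReal.ofReal ?_ * _
        exact rpow_le_rpow_of_nonpos hR hRy (neg_nonpos.2 hp)
    _ = ENNReal.ofReal (R ^ (-p)) * ∫⁻ y in (ball x R)ᶜ, u y ∂μ :=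
        lintegral_const_mul' _ _ ENNReal.ofReal_ne_top
    _ ≤ ENNReal.ofReal (R ^ (-p)) * ∫⁻ y, u y ∂μ := by
        gcongr
        exact Measure.restrict_le_self

theorem setLIntegral_ball_rpow_neg_norm_sub_mul_le [μ.IsAddLeftInvariant] [μ.IsNegInvariant]
    {u : G → ℝ≥0∞} {A : ℝ≥0∞} (hu : ∀ᵐ y ∂μ, u y ≤ A) (p : ℝ) (x : G) (R : ℝ) :
    ∫⁻ y in ball x R, ENNReal.ofReal (‖x - y‖ ^ (-p)) * u y ∂μ ≤
      A * ∫⁻ y in ball 0 R, ENNReal.ofReal (‖y‖ ^ (-p)) ∂μ := by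
  calc ∫⁻ y in ball x R, ENNReal.ofReal (‖x - y‖ ^ (-p)) * u y ∂μ
      ≤ ∫⁻ y in ball x R, A * ENNReal.ofReal (‖x - y‖ ^ (-p)) ∂μ := by
        refine lintegral_mono_ae (ae_restrict_of_ae (hu.mono fun y hy => ?_))
        rw [mul_comm]
        gcongr
    _ = A * ∫⁻ y in ball 0 R, ENNReal.ofReal (‖y‖ ^ (-p)) ∂μ := by
        rw [lintegral_const_mul _ (by fun_prop),
          setLIntegral_ball_comp_sub_left μ (fun y => ENNReal.ofReal (‖y‖ ^ (-p)))]

end NormedGroup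

section HaarMeasure

variable {E : Type*} [NormedAddCommGroup E] [NormedSpace ℝ E] [FiniteDimensional ℝ E]
  [MeasurableSpace E] [BorelSpace E] (μ : Measure E) [μ.IsAddHaarMeasure]

local notation "dim" => Module.finrank ℝ

theorem lintegral_fun_norm_addHaar [Nontrivial E] {g : ℝ → ℝ≥0∞} (hg : Measurable g) :
    ∫⁻ x, g ‖x‖ ∂μ =
      dim E * μ (ball 0 1) * ∫⁻ r in Ioi 0, ENNReal.ofReal (r ^ (dim E - 1)) * g r := by
  have h := (μ.measurePreserving_homeomorphUnitSphereProd).lintegral_comp_emb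
    (homeomorphUnitSphereProd E).measurableEmbedding (fun p => g p.2)
  simp only [homeomorphUnitSphereProd_apply_snd_coe] at h
  conv_lhs => rw [← restrict_compl_singleton (μ := μ) 0]
  rw [← lintegral_subtype_comap (measurableSet_singleton 0).compl, h,
    lintegral_prod _ (by fun_prop)]
  dsimp only
  rw [lintegral_const, mul_comm, Measure.toSphere_apply_univ,
    Measure.volumeIoiPow, lintegral_withDensity_eq_lintegral_mul _ (by fun_prop) (by fun_prop),
    ← lintegral_subtype_comap measurableSet_Ioi (fun r => ENNReal.ofReal (r ^ _) * g r)]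
  rfl

theorem setLIntegral_ball_norm_rpow_neg [Nontrivial E] {p R : ℝ} (hp : p < dim E) (hR : 0 ≤ R) :
    ∫⁻ x in ball 0 R, ENNReal.ofReal (‖x‖ ^ (-p)) ∂μ =
      ENNReal.ofReal (dim E * μ.real (ball 0 1) / (dim E - p) * R ^ (dim E - p)) := by
  have hball : (ball (0 : E) R).indicator (fun x => ENNReal.ofReal (‖x‖ ^ (-p))) =
      fun x => (Iio R).indicator (fun r => ENNReal.ofReal (r ^ (-p))) ‖x‖ := by
    ext x; simp [indicator]
  have hradial : ∀ r ∈ Ioi (0 : ℝ),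
      ENNReal.ofReal (r ^ (dim E - 1)) * (Iio R).indicator (fun r => ENNReal.ofReal (r ^ (-p))) r
        = (Iio R).indicator (fun r => ENNReal.ofReal (r ^ ((dim E : ℝ) - p - 1))) r := by
    intro r (hr : 0 < r)
    by_cases hrR : r < R
    · simp only [indicator_of_mem (mem_Iio.2 hrR)]
      rw [← ENNReal.ofReal_mul (by positivity), ← rpow_natCast, ← rpow_add hr,
        Nat.cast_sub Module.finrank_pos]
      ring_nf
    · simp [hrR]
  rw [← lintegral_indicator measurableSet_ball, hball, lintegral_fun_norm_addHaar μ
      ((Measurable.ennreal_ofReal (by fun_prop)).indicator measurableSet_Iio),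
    setLIntegral_congr_fun measurableSet_Ioi hradial, lintegral_indicator measurableSet_Iio,
    Measure.restrict_restrict measurableSet_Iio, Iio_inter_Ioi,
    lintegral_Ioo_rpow (by linarith) hR, sub_add_cancel, ← ENNReal.ofReal_natCast,
    ← ofReal_measureReal measure_ball_lt_top.ne, ← ENNReal.ofReal_mul (by positivity),
    ← ENNReal.ofReal_mul (by positivity)]
  congr 1
  ring

theorem lintegral_rpow_neg_norm_sub_mul_le [Nontrivial E] {u : E → ℝ≥0∞} {A : ℝ≥0∞}
    (hu : ∀ᵐ y ∂μ, u y ≤ A) {p R : ℝ} (hp0 : 0 ≤ p) (hp : p < dim E) (hR : 0 < R) (x : E) :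
    ∫⁻ y, ENNReal.ofReal (‖x - y‖ ^ (-p)) * u y ∂μ ≤
      A * ENNReal.ofReal (dim E * μ.real (ball 0 1) / (dim E - p) * R ^ (dim E - p)) +
        ENNReal.ofReal (R ^ (-p)) * ∫⁻ y, u y ∂μ := by
  rw [← lintegral_add_compl _ (measurableSet_ball (x := x) (ε := R)),
    ← setLIntegral_ball_norm_rpow_neg μ hp hR.le]
  exact add_le_add (setLIntegral_ball_rpow_neg_norm_sub_mul_le μ hu p x R)
    (setLIntegral_compl_ball_rpow_neg_norm_sub_mul_le μ u hp0 hR x)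

end HaarMeasure

theorem stmt2 (C₀ γ : ℝ) (hC₀ : 0 < C₀) (hγ0 : 0 < γ) (hγ : γ < 3/2) :
    ∃ C > (0:ℝ), ∀ φ : ℝ → EuclideanSpace ℝ (Fin 3) → ℂ,
      (∀ s : ℝ, 0 ≤ s → eLpNorm (φ s) 2 volume ≤ ENNReal.ofReal C₀) →
      (∀ s : ℝ, 0 ≤ s →
        eLpNorm (φ s) ⊤ volume ≤ ENNReal.ofReal (C₀ * (1+s) ^ (-(3:ℝ)/2))) →
      ∀ (x : EuclideanSpace ℝ (Fin 3)) (s : ℝ), 0 ≤ s →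
        (∫ y, ‖x - y‖ ^ (-(2*γ)) * ‖φ s y‖ ^ 2) ≤ C * (1+s) ^ (-(2*γ)) := by
  have hdim : (Module.finrank ℝ (EuclideanSpace ℝ (Fin 3)) : ℝ) = 3 := by simp
  set κ := 3 * volume.real (ball (0 : EuclideanSpace ℝ (Fin 3)) 1) / (3 - 2 * γ)
  have hκ : 0 ≤ κ := div_nonneg (by positivity) (by linarith)
  refine ⟨C₀ ^ 2 * (κ + 1), by positivity, fun φ hL2 hLinf x s hs => ?_⟩
  have hR : 0 < 1 + s := by linarith
  have hsplit := lintegral_rpow_neg_norm_sub_mul_le volume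
    (ae_enorm_sq_le_of_eLpNorm_top_le (hLinf s hs)) (p := 2 * γ) (by linarith)
    (by rw [hdim]; linarith) hR x
  rw [hdim] at hsplit
  have hdecay : (C₀ * (1 + s) ^ (-(3:ℝ)/2)) ^ 2 * (κ * (1 + s) ^ (3 - 2 * γ)) +
      (1 + s) ^ (-(2 * γ)) * C₀ ^ 2 = C₀ ^ 2 * (κ + 1) * (1 + s) ^ (-(2 * γ)) := by
    rw [mul_pow, ← rpow_natCast ((1 + s) ^ _) 2, ← rpow_mul hR.le, mul_mul_mul_comm, ← rpow_add hR]
    ring_nf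
  refine (integral_mul_norm_sq_le_toReal_lintegral fun y => by positivity).trans
    (ENNReal.toReal_le_of_le_ofReal (by positivity) (hsplit.trans ?_))
  grw [lintegral_enorm_sq_le_of_eLpNorm_two_le (hL2 s hs)]
  rw [← ENNReal.ofReal_pow hC₀.le, ← ENNReal.ofReal_pow (by positivity),
    ← ENNReal.ofReal_mul (by positivity), ← ENNReal.ofReal_mul (by positivity),
    ← ENNReal.ofReal_add (by positivity) (by positivity), ← hdecay]
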